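/- Let K be a field of characteristic 0, n ≥ 2, K_n = K[x_1^{±1},...,x_n^{±1}], θ = (1,...,1), Δ(u) = Σ_{i=1}^n x_i·∂_i(u) + (n/(1−n))·u, and D_i(u) = x^{−θ+ε_i}·∂_i(u) for i = 1,...,n. If λ_0, λ_1,...,λ_n ∈ K and u_1,...,u_{n−1} ∈ K_n are such that λ_0·Δ(v) + Σ_{i=1}^n λ_i·D_i(v) = Jac_n^S(u_1,...,u_{n−1}, v) for all v ∈ K_n, then λ_0 = λ_1 = ... = λ_n = 0. In particular, no nontrivial linear combination of the derivations Δ, D_1,...,D_n of (K_n, Jac_n^S) is an interior derivation. -/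

import Mathlib

open Finset

/-- The Laurent polynomial algebra `K[x_1^{±1},…,x_n^{±1}]`, realized as the group algebra
of `ℤ^n` over `K`. -/
abbrev Laurent (K : Type*) [Field K] (n : ℕ) : Type _ := AddMonoidAlgebra K (Fin n → ℤ)

/-- The monomial `x^α`. -/
noncomputable def lmon {K : Type*} [Field K] {n : ℕ} (α : Fin n → ℤ) : Laurent K n :=
  AddMonoidAlgebra.single α 1

/-- The partial derivative `∂_i`, with `∂_i(x^α) = α_i x^{α − ε_i}`. -/
noncomputable def lpd {K : Type*} [Field K] {n : ℕ} (i : Fin n) (u : Laurent K n) :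
    Laurent K n :=
  Finsupp.sum u.coeff fun α c => AddMonoidAlgebra.single (α - Pi.single i 1) ((α i : K) * c)

/-- The Jacobian `Jac_n^S(u_1,…,u_n) = det(∂_i u_j)` on Laurent polynomials. -/
noncomputable def ljac {K : Type*} [Field K] {n : ℕ} (u : Fin n → Laurent K n) : Laurent K n :=
  Matrix.det (Matrix.of fun i j => lpd i (u j))

/-- The linear map `Δ(u) = Σ_i x_i·∂_i(u) + (n/(1−n))·u` on Laurent polynomials. -/
noncomputable def lDelta {K : Type*} [Field K] {n : ℕ} (u : Laurent K n) : Laurent K n :=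
  (∑ i : Fin n, lmon (Pi.single i 1) * lpd i u) + ((n : K) / (1 - (n : K))) • u

/-- The map `D_i(u) = x^{−θ+ε_i}·∂_i(u)` on Laurent polynomials. -/
noncomputable def lDi {K : Type*} [Field K] {n : ℕ} (i : Fin n) (u : Laurent K n) :
    Laurent K n :=
  lmon ((fun _ => (-1 : ℤ)) + Pi.single i 1) * lpd i u

/-! Testing on monomials: `Δ(1) = n/(1-n) ≠ 0` while `D_i(1) = 0` and `Jac(u, 1) = 0`, so `λ_0 = 0`.
Next, `D_i(x^β) = β_i x^{β-θ}`, whereas the coefficient of `x^{β-θ}` in `Jac(u_1,…,u_{n-1}, x^β)`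
vanishes: by multilinearity it suffices to take `u_j = x^{α_j}`, and then the Jacobian is
`det(α_1,…,α_{n-1},β) x^{Σ α_j + β - θ}`, whose exponent is `β - θ` only when `Σ α_j = 0`, which
kills the determinant. Hence `Σ λ_i β_i = 0` for every `β ∈ ℤ^n`. -/

theorem Matrix.det_eq_zero_of_sum_cols_eq_zero {ι R : Type*} [Fintype ι] [DecidableEq ι]
    [CommRing R] [IsDomain R] (A : Matrix ι ι R) {s : Finset ι} (hs : s.Nonempty)
    (h : ∀ k, ∑ j ∈ s, A k j = 0) : A.det = 0 := by
  rw [← Matrix.exists_mulVec_eq_zero_iff]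
  obtain ⟨j, hj⟩ := hs
  refine ⟨fun j => if j ∈ s then 1 else 0, fun h0 => by simpa [hj] using congrFun h0 j, ?_⟩
  funext k
  simp [Matrix.mulVec, dotProduct, h]

section Laurent

variable {K : Type*} [Field K] {n : ℕ}

theorem lpd_single (i : Fin n) (α : Fin n → ℤ) (c : K) :
    lpd i (AddMonoidAlgebra.single α c : Laurent K n) =
      AddMonoidAlgebra.single (α - Pi.single i 1) (α i * c) := by
  rw [lpd, AddMonoidAlgebra.coeff_single, Finsupp.sum_single_index]
  simp

theorem lpd_lmon (i : Fin n) (α : Fin n → ℤ) :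
    lpd i (lmon α : Laurent K n) = AddMonoidAlgebra.single (α - Pi.single i 1) (α i : K) := by
  rw [lmon, lpd_single, mul_one]

noncomputable def lpdLinearMap (i : Fin n) : Laurent K n →ₗ[K] Laurent K n where
  toFun := lpd i
  map_add' u v := by
    rw [lpd, lpd, lpd, AddMonoidAlgebra.coeff_add, Finsupp.sum_add_index'] <;>
      simp [mul_add, AddMonoidAlgebra.single_add]
  map_smul' c u := by
    rw [lpd, lpd, AddMonoidAlgebra.coeff_smul, Finsupp.sum_smul_index' (by simp),
      RingHom.id_apply, Finsupp.smul_sum]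
    refine Finsupp.sum_congr fun α _ => ?_
    rw [AddMonoidAlgebra.smul_single', smul_eq_mul, mul_left_comm]

noncomputable def ljacMultilinearMap :
    MultilinearMap K (fun _ : Fin n => Laurent K n) (Laurent K n) :=
  ((Matrix.detRowAlternating : (Fin n → Laurent K n) [⋀^Fin n]→ₗ[Laurent K n] Laurent K n)
    |>.toMultilinearMap.restrictScalars K).compLinearMap fun _ => LinearMap.pi lpdLinearMap

theorem ljacMultilinearMap_apply (w : Fin n → Laurent K n) :
    ljacMultilinearMap w = ljac w := by
  rw [ljac, ← Matrix.det_transpose]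
  rfl

theorem ljac_lmon (α : Fin n → Fin n → ℤ) :
    ljac (fun j => (lmon (α j) : Laurent K n)) =
      AddMonoidAlgebra.single (∑ j, α j - 1) (Matrix.of fun k j => (α j k : K)).det := by
  rw [ljac, Matrix.det_apply, Matrix.det_apply]
  refine Eq.trans ?_ (map_sum (AddMonoidAlgebra.singleAddHom _) _ _).symm
  refine Finset.sum_congr rfl fun σ _ => ?_
  rw [AddMonoidAlgebra.singleAddHom_apply, ← AddMonoidAlgebra.smul_single]
  simp only [Matrix.of_apply, lpd_lmon, AddMonoidAlgebra.prod_single, Finset.sum_sub_distrib,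
    Equiv.sum_comp σ (fun k => (Pi.single k 1 : Fin n → ℤ)), Finset.univ_sum_single]
  rfl

theorem lDelta_lmon (β : Fin n → ℤ) :
    lDelta (lmon β : Laurent K n) =
      AddMonoidAlgebra.single β (∑ i, (β i : K) + n / (1 - n)) := by
  have hsummand : ∀ i : Fin n, lmon (Pi.single i 1) * lpd i (lmon β : Laurent K n) =
      AddMonoidAlgebra.single β (β i : K) := by
    intro i
    rw [lpd_lmon, lmon, AddMonoidAlgebra.single_mul_single, one_mul, add_sub_cancel]
  rw [lDelta, Finset.sum_congr rfl fun i _ => hsummand i, lmon, AddMonoidAlgebra.smul_single',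
    mul_one, AddMonoidAlgebra.single_add]
  exact congrArg (· + _) (map_sum (AddMonoidAlgebra.singleAddHom β) _ _).symm

theorem lDi_lmon (i : Fin n) (β : Fin n → ℤ) :
    lDi i (lmon β : Laurent K n) = AddMonoidAlgebra.single (β - 1) (β i : K) := by
  rw [lDi, lpd_lmon, lmon, AddMonoidAlgebra.single_mul_single, one_mul]
  congr 1
  funext k
  simp only [Pi.add_apply, Pi.sub_apply, Pi.one_apply]
  ring

theorem ljac_snoc_lmon_zero {m : ℕ} (u : Fin m → Laurent K (m + 1)) :
    ljac (Fin.snoc u (lmon 0)) = 0 :=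
  Matrix.det_eq_zero_of_column_eq_zero (Fin.last m) fun i => by simp [lpd_lmon]

theorem coeff_ljac_snoc_lmon {m : ℕ} (u : Fin (m + 1) → Laurent K (m + 2))
    (β : Fin (m + 2) → ℤ) :
    (ljac (Fin.snoc u (lmon β))).coeff (β - 1) = 0 := by
  let coeffAtLmon : (Laurent K (m + 2) →ₗ[K] Laurent K (m + 2)) →ₗ[K] K :=
    Finsupp.lapply (β - 1) ∘ₗ (AddMonoidAlgebra.coeffLinearEquiv K).toLinearMap ∘ₗ
      LinearMap.applyₗ (lmon β)
  suffices hzero : coeffAtLmon.compMultilinearMap ljacMultilinearMap.curryRight = 0 by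
    simpa [coeffAtLmon, ljacMultilinearMap_apply] using congrArg (· u) hzero
  refine Module.Basis.ext_multilinear (fun _ => AddMonoidAlgebra.basis _ K) fun α => ?_
  change (ljacMultilinearMap (Fin.snoc (lmon ∘ α) (lmon β))).coeff (β - 1) = 0
  rw [← Fin.comp_snoc lmon α β, ljacMultilinearMap_apply, Function.comp_def, ljac_lmon,
    AddMonoidAlgebra.coeff_single, Finsupp.single_apply, ite_eq_right_iff]
  intro hexp
  have hsum : ∑ j, α j = 0 := by
    simpa [Fin.sum_univ_castSucc] using hexp
  refine Matrix.det_eq_zero_of_sum_cols_eq_zero _ (univ_nonempty.map (f := Fin.castSuccEmb))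
    fun k => ?_
  simpa [Finset.sum_map] using congrArg (fun v => (v k : K)) hsum

end Laurent

/-- (char `K = 0`, `n = m + 2 ≥ 2`.) If `λ_0·Δ(v) + Σ_i λ_i·D_i(v) = Jac_n^S(u_1,…,u_{n−1},v)`
for all `v`, then `λ_0 = λ_1 = … = λ_n = 0`; i.e. no nontrivial linear combination of the
outer derivations `Δ, D_1,…,D_n` of `(K_n, Jac_n^S)` is interior. -/
theorem lDelta_lDi_not_interior {K : Type*} [Field K] [CharZero K] {m : ℕ}
    (lam0 : K) (lam : Fin (m + 2) → K) (u : Fin (m + 1) → Laurent K (m + 2))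
    (h : ∀ v : Laurent K (m + 2),
      lam0 • lDelta v + ∑ i : Fin (m + 2), lam i • lDi i v = ljac (Fin.snoc u v)) :
    lam0 = 0 ∧ ∀ i : Fin (m + 2), lam i = 0 := by
  have hlam0 : lam0 = 0 := by
    have hconst := congrArg (·.coeff 0) (h (lmon 0))
    have hn : (1 : K) - (m + 2 : ℕ) ≠ 0 := sub_ne_zero.2 (by norm_cast; omega)
    simpa [lDelta_lmon, lDi_lmon, ljac_snoc_lmon_zero, hn, -Nat.cast_add, -Nat.cast_ofNat]
      using hconst
  have hlam : ∀ β : Fin (m + 2) → ℤ, ∑ i, lam i * β i = 0 := by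
    intro β
    have hcoeff := congrArg (·.coeff (β - 1)) (h (lmon β))
    simpa [coeff_ljac_snoc_lmon, hlam0, lDi_lmon] using hcoeff
  exact ⟨hlam0, fun i => by simpa [Pi.single_apply] using hlam (Pi.single i 1)⟩
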